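/- The Perron eigenvector of a simple perturbed pairwise comparison matrix is efficient: there is no positive vector w' such that |a_{ij} − w'_i/w'_j| ≤ |a_{ij} − w_i/w_j| for all i,j with strict inequality for at least one pair, where w is the Perron eigenvector of A_δ. -/

import Mathlib

/-!
Write `u i = x i * w i`. The eigenvector equations of the rows `i ≥ 2` all read `λ u i = ∑ u`,
so `w` reproduces the consistent block `{2, …, n-1}` of `A_δ` exactly, while rows `0` and `1`
show that the three remaining errors `a₀₂ - w₀/w₂`, `a₂₁ - w₂/w₁`, `a₁₀ - w₁/w₀` all have the
sign of `1 - δ`.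

If `w'` dominates `w`, then `ρ = w'/w` satisfies `ρ i = ρ j` wherever `w` is exact, and
elsewhere `ρ i - ρ j` has the sign of the error `a i j - w i / w j`. Around the cycle
`0 → 2 → 1 → 0` these differences thus have a common sign and sum to zero, so they vanish:
`w'` is proportional to `w` and improves no entry.
-/

/-- A pairwise comparison matrix: positive entries with the reciprocal property. -/
def IsPCM {n : ℕ} (A : Matrix (Fin n) (Fin n) ℝ) : Prop :=
  (∀ i j, 0 < A i j) ∧ (∀ i j, A j i = 1 / A i j)

/-- A PCM is consistent if `a i k * a k j = a i j` for all `i j k`. -/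
def IsConsistent {n : ℕ} (A : Matrix (Fin n) (Fin n) ℝ) : Prop :=
  ∀ i j k, A i k * A k j = A i j

/-- `lam` together with a positive eigenvector `w` forms the Perron eigenpair of `A`
(for a positive matrix, the eigenvalue admitting a positive eigenvector is exactly
the Perron (maximal) eigenvalue). -/
def IsPerronEigenpair {n : ℕ} (A : Matrix (Fin n) (Fin n) ℝ) (lam : ℝ)
    (w : Fin n → ℝ) : Prop :=
  (∀ i, 0 < w i) ∧ A.mulVec w = lam • w

/-- The simple perturbed PCM `A_δ`: the consistent PCM generated by positive weights
`x` (with `x 0 = 1`), whose entry in position (1,2) (0-based: (0,1)) is multiplied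
by `δ` and its reciprocal by `1/δ`. -/
noncomputable def simplePerturbed {n : ℕ} (x : Fin n → ℝ) (δ : ℝ) : Matrix (Fin n) (Fin n) ℝ :=
  fun i j =>
    if i.val = 0 ∧ j.val = 1 then x j * δ
    else if i.val = 1 ∧ j.val = 0 then 1 / (x i * δ)
    else x j / x i

/-- A positive weight vector `w` is efficient for `A` if no positive vector `w'`
approximates every entry at least as well, and some entry strictly better. -/
def IsEfficient {n : ℕ} (A : Matrix (Fin n) (Fin n) ℝ) (w : Fin n → ℝ) : Prop :=
  ¬ ∃ w' : Fin n → ℝ, (∀ i, 0 < w' i) ∧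
      (∀ i j, |A i j - w' i / w' j| ≤ |A i j - w i / w j|) ∧
      (∃ k l, |A k l - w' k / w' l| < |A k l - w k / w l|)

section Dominance

variable {n : ℕ}

def Dominates (A : Matrix (Fin n) (Fin n) ℝ) (w' w : Fin n → ℝ) : Prop :=
  ∀ i j, |A i j - w' i / w' j| ≤ |A i j - w i / w j|

lemma isEfficient_of_forall_dominates_ratio_eq {A : Matrix (Fin n) (Fin n) ℝ} {w : Fin n → ℝ}
    (hw : ∀ i, 0 < w i)
    (h : ∀ w', (∀ i, 0 < w' i) → Dominates A w' w → ∀ i j, w' i / w i = w' j / w j) :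
    IsEfficient A w := by
  rintro ⟨w', hw', hdom, k, l, hlt⟩
  have hkl : w' k / w' l = w k / w l := by
    have := h w' hw' hdom k l
    rw [div_eq_div_iff (hw k).ne' (hw l).ne'] at this
    rw [div_eq_div_iff (hw' l).ne' (hw l).ne']
    linear_combination this
  exact (hkl ▸ hlt).false

lemma sub_mul_sub_nonneg_of_abs_sub_le {c p q : ℝ} (h : |c - p| ≤ |c - q|) :
    0 ≤ (c - q) * (p - q) := by
  have := sq_le_sq.mpr (by simpa using h)
  nlinarith [sq_nonneg (p - q)]

variable {w w' : Fin n → ℝ} {i j : Fin n} {c : ℝ}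

lemma sub_mul_ratio_sub_nonneg (hw : ∀ i, 0 < w i) (hw' : ∀ i, 0 < w' i)
    (h : |c - w' i / w' j| ≤ |c - w i / w j|) :
    0 ≤ (c - w i / w j) * (w' i / w i - w' j / w j) := by
  have hk : 0 < w i / w' j := div_pos (hw i) (hw' j)
  have hsplit : w' i / w' j - w i / w j = (w' i / w i - w' j / w j) * (w i / w' j) := by
    field_simp [(hw i).ne', (hw j).ne', (hw' j).ne']
  have := sub_mul_sub_nonneg_of_abs_sub_le h
  rw [hsplit, ← mul_assoc] at this
  exact nonneg_of_mul_nonneg_left this hk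

lemma mul_ratio_sub_nonneg_of_pos {d : ℝ} (hw : ∀ i, 0 < w i) (hw' : ∀ i, 0 < w' i)
    (hd : 0 < d * (c - w i / w j)) (h : |c - w' i / w' j| ≤ |c - w i / w j|) :
    0 ≤ d * (w' i / w i - w' j / w j) := by
  refine nonneg_of_mul_nonneg_right ?_ hd
  have := mul_nonneg (sq_nonneg d) (sub_mul_ratio_sub_nonneg hw hw' h)
  linarith

lemma ratio_eq_of_abs_sub_le_of_eq (hw : ∀ i, 0 < w i) (hw' : ∀ i, 0 < w' i)
    (hc : c = w i / w j) (h : |c - w' i / w' j| ≤ |c - w i / w j|) :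
    w' i / w i = w' j / w j := by
  rw [hc, sub_self, abs_zero, abs_nonpos_iff, sub_eq_zero,
    div_eq_div_iff (hw j).ne' (hw' j).ne'] at h
  rw [div_eq_div_iff (hw i).ne' (hw j).ne']
  linear_combination -h

end Dominance

section SimplePerturbed

variable {m : ℕ} {x w : Fin (m + 2) → ℝ} {δ : ℝ}

lemma simplePerturbed_apply (i j : Fin (m + 2)) :
    simplePerturbed x δ i j =
      if i = 0 ∧ j = 1 then x j * δ
      else if i = 1 ∧ j = 0 then 1 / (x i * δ)
      else x j / x i := by
  simp only [simplePerturbed, Fin.ext_iff, Fin.val_zero, Fin.val_one]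

lemma x_mul_simplePerturbed_mulVec_of_ne (hx : ∀ i, 0 < x i) {i : Fin (m + 2)}
    (hi0 : i ≠ 0) (hi1 : i ≠ 1) :
    x i * (simplePerturbed x δ).mulVec w i = ∑ j, x j * w j := by
  simp only [Matrix.mulVec, dotProduct, simplePerturbed_apply, hi0, hi1, false_and, if_false,
    Finset.mul_sum]
  refine Finset.sum_congr rfl fun j _ => ?_
  field_simp [(hx i).ne']

lemma simplePerturbed_mulVec_zero (hx0 : x 0 = 1) :
    (simplePerturbed x δ).mulVec w 0 = ∑ j, x j * w j + (δ - 1) * (x 1 * w 1) := by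
  have hrow : ∀ j, simplePerturbed x δ 0 j * w j
      = x j * w j + if j = 1 then (δ - 1) * (x 1 * w 1) else 0 := by
    intro j
    by_cases hj : j = 1
    · subst hj
      simp only [simplePerturbed_apply, and_self, ↓reduceIte]
      ring
    · simp [simplePerturbed_apply, hj, hx0]
  simp only [Matrix.mulVec, dotProduct, hrow, Finset.sum_add_distrib, Finset.sum_ite_eq',
    Finset.mem_univ, if_true]

lemma x_mul_simplePerturbed_mulVec_one (hx : ∀ i, 0 < x i) (hx0 : x 0 = 1) (hδ : δ ≠ 0) :
    x 1 * (simplePerturbed x δ).mulVec w 1 = ∑ j, x j * w j + (δ⁻¹ - 1) * w 0 := by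
  have hrow : ∀ j, x 1 * (simplePerturbed x δ 1 j * w j)
      = x j * w j + if j = 0 then (δ⁻¹ - 1) * w 0 else 0 := by
    intro j
    by_cases hj : j = 0
    · subst hj
      simp only [simplePerturbed_apply, one_ne_zero, zero_ne_one, and_self, ↓reduceIte, hx0]
      field_simp [(hx 1).ne']
      ring
    · simp only [simplePerturbed_apply, one_ne_zero, false_and, ↓reduceIte, hj, and_false,
        add_zero]
      field_simp [(hx 1).ne']
  simp only [Matrix.mulVec, dotProduct, Finset.mul_sum, hrow, Finset.sum_add_distrib,
    Finset.sum_ite_eq', Finset.mem_univ, if_true]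

lemma simplePerturbed_pos (hx : ∀ i, 0 < x i) (hδ : 0 < δ) (i j : Fin (m + 2)) :
    0 < simplePerturbed x δ i j := by
  rw [simplePerturbed_apply]
  split_ifs <;> have := hx i <;> have := hx j <;> positivity

end SimplePerturbed

lemma IsPerronEigenpair.eigenvalue_pos {n : ℕ} {A : Matrix (Fin n) (Fin n) ℝ} {lam : ℝ}
    {w : Fin n → ℝ} (h : IsPerronEigenpair A lam w) (hA : ∀ i j, 0 < A i j) (i : Fin n) :
    0 < lam := by
  have hrow : ∑ j, A i j * w j = lam * w i := congrFun h.2 i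
  have hsum : 0 < ∑ j, A i j * w j :=
    Finset.sum_pos (fun j _ => mul_pos (hA i j) (h.1 j)) ⟨i, Finset.mem_univ i⟩
  exact pos_of_mul_pos_left (hrow ▸ hsum) (h.1 i).le

section PerronSimplePerturbed

variable {m : ℕ} {x w : Fin (m + 2) → ℝ} {δ lam : ℝ}

lemma IsPerronEigenpair.simplePerturbed_row_of_ne
    (h : IsPerronEigenpair (simplePerturbed x δ) lam w) (hx : ∀ i, 0 < x i) {i : Fin (m + 2)}
    (hi0 : i ≠ 0) (hi1 : i ≠ 1) :
    lam * (x i * w i) = ∑ j, x j * w j := by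
  rw [← x_mul_simplePerturbed_mulVec_of_ne hx hi0 hi1, h.2, Pi.smul_apply, smul_eq_mul]
  ring

lemma IsPerronEigenpair.simplePerturbed_row_zero
    (h : IsPerronEigenpair (simplePerturbed x δ) lam w) (hx0 : x 0 = 1) :
    lam * w 0 = ∑ j, x j * w j + (δ - 1) * (x 1 * w 1) := by
  rw [← simplePerturbed_mulVec_zero hx0, h.2, Pi.smul_apply, smul_eq_mul]

lemma IsPerronEigenpair.simplePerturbed_row_one
    (h : IsPerronEigenpair (simplePerturbed x δ) lam w) (hx : ∀ i, 0 < x i) (hx0 : x 0 = 1)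
    (hδ : δ ≠ 0) :
    lam * (δ * (x 1 * w 1)) = δ * ∑ j, x j * w j + (1 - δ) * w 0 := by
  have := x_mul_simplePerturbed_mulVec_one (w := w) hx hx0 hδ
  rw [h.2, Pi.smul_apply, smul_eq_mul] at this
  field_simp at this ⊢
  linear_combination this

lemma IsPerronEigenpair.simplePerturbed_apply_eq_div
    (h : IsPerronEigenpair (simplePerturbed x δ) lam w) (hx : ∀ i, 0 < x i) (hδ : 0 < δ)
    {i j : Fin (m + 2)} (hi0 : i ≠ 0) (hi1 : i ≠ 1) (hj0 : j ≠ 0) (hj1 : j ≠ 1) :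
    simplePerturbed x δ i j = w i / w j := by
  have hlam := h.eigenvalue_pos (simplePerturbed_pos hx hδ) i
  have huij : x i * w i = x j * w j := mul_left_cancel₀ hlam.ne' <| by
    rw [h.simplePerturbed_row_of_ne hx hi0 hi1, h.simplePerturbed_row_of_ne hx hj0 hj1]
  rw [simplePerturbed_apply, if_neg (by tauto), if_neg (by tauto),
    div_eq_div_iff (hx i).ne' (h.1 j).ne']
  linear_combination -huij

end PerronSimplePerturbed

lemma Fin.sum_univ_three_le {m : ℕ} {f : Fin (m + 3) → ℝ} (hf : ∀ i, 0 ≤ f i) :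
    f 0 + f 1 + f 2 ≤ ∑ i, f i := by
  have := Finset.sum_nonneg fun (i : Fin m) (_ : i ∈ Finset.univ) => hf i.succ.succ.succ
  simp only [Fin.sum_univ_succ, Fin.succ_zero_eq_one, Fin.succ_one_eq_two]
  linarith

lemma Fin.two_ne_zero_and_one (m : ℕ) : (2 : Fin (m + 3)) ≠ 0 ∧ (2 : Fin (m + 3)) ≠ 1 := by
  constructor <;> simp [Fin.ext_iff, Nat.mod_eq_of_lt (show 2 < m + 3 by omega)]

section PerronSign

variable {m : ℕ} {x w : Fin (m + 3) → ℝ} {δ lam : ℝ}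

lemma IsPerronEigenpair.one_sub_mul_error_zero_two_pos
    (h : IsPerronEigenpair (simplePerturbed x δ) lam w) (hx : ∀ i, 0 < x i) (hx0 : x 0 = 1)
    (hδ : 0 < δ) (hδ1 : δ ≠ 1) :
    0 < (1 - δ) * (simplePerturbed x δ 0 2 - w 0 / w 2) := by
  obtain ⟨h20, h21⟩ := Fin.two_ne_zero_and_one m
  have hlam := h.eigenvalue_pos (simplePerturbed_pos hx hδ) 0
  have r0 := h.simplePerturbed_row_zero hx0
  have r2 := h.simplePerturbed_row_of_ne hx h20 h21
  have hA : simplePerturbed x δ 0 2 = x 2 := by simp [simplePerturbed_apply, h21, hx0]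
  have := h.1 2
  have key : (1 - δ) * (x 2 - w 0 / w 2) = (1 - δ) ^ 2 * (x 1 * w 1) / (lam * w 2) := by
    field_simp
    linear_combination r2 - r0
  rw [hA, key]
  have := sub_ne_zero.mpr hδ1.symm
  have := hx 1; have := h.1 1
  positivity

lemma IsPerronEigenpair.one_sub_mul_error_two_one_pos
    (h : IsPerronEigenpair (simplePerturbed x δ) lam w) (hx : ∀ i, 0 < x i) (hx0 : x 0 = 1)
    (hδ : 0 < δ) (hδ1 : δ ≠ 1) :
    0 < (1 - δ) * (simplePerturbed x δ 2 1 - w 2 / w 1) := by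
  obtain ⟨h20, h21⟩ := Fin.two_ne_zero_and_one m
  have hlam := h.eigenvalue_pos (simplePerturbed_pos hx hδ) 0
  have r1 := h.simplePerturbed_row_one hx hx0 hδ.ne'
  have r2 := h.simplePerturbed_row_of_ne hx h20 h21
  have hA : simplePerturbed x δ 2 1 = x 1 / x 2 := by simp [simplePerturbed_apply, h20, h21]
  have := hx 1; have := hx 2; have := h.1 0; have := h.1 1
  have key : (1 - δ) * (x 1 / x 2 - w 2 / w 1) = (1 - δ) ^ 2 * w 0 / (δ * lam * x 2 * w 1) := by
    field_simp
    linear_combination r1 - δ * r2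
  rw [hA, key]
  have := sub_ne_zero.mpr hδ1.symm
  positivity

lemma IsPerronEigenpair.one_sub_mul_error_one_zero_pos
    (h : IsPerronEigenpair (simplePerturbed x δ) lam w) (hx : ∀ i, 0 < x i) (hx0 : x 0 = 1)
    (hδ : 0 < δ) (hδ1 : δ ≠ 1) :
    0 < (1 - δ) * (simplePerturbed x δ 1 0 - w 1 / w 0) := by
  have hlam := h.eigenvalue_pos (simplePerturbed_pos hx hδ) 0
  have r0 := h.simplePerturbed_row_zero hx0
  have r1 := h.simplePerturbed_row_one hx hx0 hδ.ne'
  have hA : simplePerturbed x δ 1 0 = 1 / (x 1 * δ) := by simp [simplePerturbed_apply]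
  have := hx 1; have := h.1 0; have := h.1 1
  have hrest : 0 < ∑ j, x j * w j - w 0 - x 1 * w 1 := by
    have hsum := Fin.sum_univ_three_le fun i => (mul_pos (hx i) (h.1 i)).le
    rw [hx0, one_mul] at hsum
    linarith [mul_pos (hx 2) (h.1 2)]
  have key : (1 - δ) * (1 / (x 1 * δ) - w 1 / w 0)
      = (1 - δ) ^ 2 * (∑ j, x j * w j - w 0 - x 1 * w 1) / (lam * x 1 * δ * w 0) := by
    field_simp
    linear_combination r0 - r1
  rw [hA, key]
  have := sub_ne_zero.mpr hδ1.symm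
  exact div_pos (mul_pos (by positivity) hrest) (by positivity)

end PerronSign

lemma eq_and_eq_of_mul_sub_nonneg_cycle {d a b c : ℝ} (hd : d ≠ 0) (hab : 0 ≤ d * (a - b))
    (hbc : 0 ≤ d * (b - c)) (hca : 0 ≤ d * (c - a)) : a = b ∧ b = c := by
  have hsum : d * (a - b) + d * (b - c) + d * (c - a) = 0 := by ring
  have hab' : d * (a - b) = 0 := by linarith
  have hbc' : d * (b - c) = 0 := by linarith
  constructor
  · simpa [hd, sub_eq_zero] using hab'
  · simpa [hd, sub_eq_zero] using hbc'

/-- Main theorem: the Perron eigenvector of a simple perturbed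
pairwise comparison matrix is efficient. -/
theorem perron_eigenvector_of_simple_perturbed_is_efficient {n : ℕ} (hn : 3 ≤ n)
    (x : Fin n → ℝ) (hx : ∀ i, 0 < x i) (hx0 : ∀ i : Fin n, i.val = 0 → x i = 1)
    (δ : ℝ) (hδ : 0 < δ) (hδ1 : δ ≠ 1)
    (lam : ℝ) (w : Fin n → ℝ)
    (hPerron : IsPerronEigenpair (simplePerturbed x δ) lam w) :
    IsEfficient (simplePerturbed x δ) w := by
  obtain ⟨m, rfl⟩ : ∃ m, n = m + 3 := ⟨n - 3, by omega⟩
  have hx0' : x 0 = 1 := hx0 0 rfl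
  obtain ⟨h20, h21⟩ := Fin.two_ne_zero_and_one m
  refine isEfficient_of_forall_dominates_ratio_eq hPerron.1 fun w' hw' hdom => ?_
  have hcycle := eq_and_eq_of_mul_sub_nonneg_cycle (sub_ne_zero.mpr hδ1.symm)
    (mul_ratio_sub_nonneg_of_pos hPerron.1 hw'
      (hPerron.one_sub_mul_error_zero_two_pos hx hx0' hδ hδ1) (hdom 0 2))
    (mul_ratio_sub_nonneg_of_pos hPerron.1 hw'
      (hPerron.one_sub_mul_error_two_one_pos hx hx0' hδ hδ1) (hdom 2 1))
    (mul_ratio_sub_nonneg_of_pos hPerron.1 hw'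
      (hPerron.one_sub_mul_error_one_zero_pos hx hx0' hδ hδ1) (hdom 1 0))
  have hconst : ∀ i, w' i / w i = w' 2 / w 2 := by
    intro i
    by_cases hi0 : i = 0
    · exact hi0 ▸ hcycle.1
    by_cases hi1 : i = 1
    · exact hi1 ▸ hcycle.2.symm
    exact ratio_eq_of_abs_sub_le_of_eq hPerron.1 hw'
      (hPerron.simplePerturbed_apply_eq_div hx hδ hi0 hi1 h20 h21) (hdom i 2)
  exact fun i j => (hconst i).trans (hconst j).symm
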